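/- arXiv:1108.0627 — 7 statements merged into one kernel-verified Lean document; each statement's English description precedes it below -/
import Mathlib

section
/- Let B be a compact convex subset of ℝ^m and let A be a convex subset of B such that the closure of A contains all exposed extreme points of B. Then A contains the interior of B. -/
/-!
A point `w` of a compact set `B` farthest from a centre `z` is exposed, by the functional
`⟪w - z, ·⟫`. Sending the centre to infinity in direction `-v`, such farthest points almost
maximise `⟪v, ·⟫` on `B`; so by separation every closed convex set containing the exposed
points of `B` contains `B` (Straszewicz). Hence `B ⊆ closure A`, and in finite dimension a
convex set contains the interior of its closure.
-/

section InnerProductSpace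

variable {E : Type*} [NormedAddCommGroup E] [InnerProductSpace ℝ E]

lemma two_mul_inner_add_norm_sq_nonpos_of_norm_sub_le {w y z : E} (h : ‖y - z‖ ≤ ‖w - z‖) :
    2 * inner ℝ (w - z) (y - w) + ‖y - w‖ ^ 2 ≤ 0 := by
  have hsplit : ‖y - z‖ ^ 2 = ‖y - w‖ ^ 2 + 2 * inner ℝ (w - z) (y - w) + ‖w - z‖ ^ 2 := by
    rw [show y - z = (y - w) + (w - z) by abel, norm_add_sq_real, real_inner_comm]
  nlinarith [norm_nonneg (y - z)]

lemma mem_exposedPoints_of_isMaxOn_dist {B : Set E} {w z : E} (hw : w ∈ B)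
    (hmax : IsMaxOn (dist · z) B w) : w ∈ B.exposedPoints ℝ := by
  refine ⟨hw, innerSL ℝ (w - z), fun y hy => ?_⟩
  have key := two_mul_inner_add_norm_sq_nonpos_of_norm_sub_le
    (by simpa only [dist_eq_norm] using isMaxOn_iff.mp hmax y hy)
  have hdiff : innerSL ℝ (w - z) y - innerSL ℝ (w - z) w = inner ℝ (w - z) (y - w) := by
    simp only [innerSL_apply_apply, inner_sub_right]
  refine ⟨by nlinarith [sq_nonneg ‖y - w‖], fun hge => ?_⟩
  have : ‖y - w‖ ^ 2 ≤ 0 := by linarith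
  exact sub_eq_zero.mp (norm_eq_zero.mp (by nlinarith [norm_nonneg (y - w)]))

lemma IsCompact.exists_mem_exposedPoints_inner_gt {B : Set E} (hB : IsCompact B) {x : E}
    (hx : x ∈ B) (v : E) {ε : ℝ} (hε : 0 < ε) :
    ∃ w ∈ B.exposedPoints ℝ, inner ℝ v x - ε < inner ℝ v w := by
  set D := Metric.diam B
  set t := D ^ 2 / ε + 1
  have ht : 0 < t := by positivity
  obtain ⟨w, hwB, hwmax⟩ := hB.exists_isMaxOn ⟨x, hx⟩
    (continuous_id.dist continuous_const).continuousOn (f := (dist · (x - t • v)))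
  refine ⟨w, mem_exposedPoints_of_isMaxOn_dist hwB hwmax, ?_⟩
  -- `⟪v, x⟫ - ⟪v, w⟫ ≤ ‖x - w‖ ^ 2 / (2 t) ≤ diam B ^ 2 / (2 t) < ε`
  have key := two_mul_inner_add_norm_sq_nonpos_of_norm_sub_le
    (by simpa only [dist_eq_norm] using isMaxOn_iff.mp hwmax x hx)
  have hxw : ‖x - w‖ ≤ D := by
    rw [← dist_eq_norm]; exact Metric.dist_le_diam_of_mem hB.isBounded hx hwB
  have hsplit : inner ℝ (w - (x - t • v)) (x - w) =
      -‖x - w‖ ^ 2 + t * (inner ℝ v x - inner ℝ v w) := by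
    rw [show w - (x - t • v) = -(x - w) + t • v by abel, inner_add_left, inner_neg_left,
      real_inner_self_eq_norm_sq, real_inner_smul_left, inner_sub_right]
  have hεt : D ^ 2 < t * ε := by
    simp only [t, add_mul, div_mul_cancel₀ _ hε.ne']; linarith
  by_contra! h
  nlinarith [norm_nonneg (x - w), Metric.diam_nonneg (s := B)]

theorem IsCompact.subset_closedConvexHull_exposedPoints [CompleteSpace E] {B : Set E}
    (hB : IsCompact B) : B ⊆ closedConvexHull ℝ (B.exposedPoints ℝ) := by
  intro x hx
  by_contra hxC
  obtain ⟨f, u, hfu, hux⟩ :=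
    geometric_hahn_banach_closed_point convex_closedConvexHull isClosed_closedConvexHull hxC
  set v := (InnerProductSpace.toDual ℝ E).symm f
  obtain ⟨w, hw, hwx⟩ := hB.exists_mem_exposedPoints_inner_gt hx v (sub_pos.mpr hux)
  have hfw := hfu w (subset_closedConvexHull hw)
  simp only [v, InnerProductSpace.toDual_symm_apply] at hwx
  linarith

end InnerProductSpace

theorem Convex.interior_closure_subset {E : Type*} [NormedAddCommGroup E] [NormedSpace ℝ E]
    [FiniteDimensional ℝ E] {s : Set E} (hs : Convex ℝ s) : interior (closure s) ⊆ s := by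
  intro x hx
  have hspan : affineSpan ℝ s = ⊤ := by
    refine top_le_iff.mp ?_
    rw [← hs.closure.interior_nonempty_iff_affineSpan_eq_top.mp ⟨x, hx⟩, affineSpan_le]
    exact closure_minimal (subset_affineSpan ℝ s) (affineSpan ℝ s).closed_of_finiteDimensional
  rw [hs.interior_closure_eq_interior_of_nonempty_interior
    (hs.interior_nonempty_iff_affineSpan_eq_top.mpr hspan)] at hx
  exact interior_subset hx

theorem stmt0_general {m : ℕ} (B A : Set (EuclideanSpace ℝ (Fin m)))
    (hBc : IsCompact B)
    (hAconv : Convex ℝ A)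
    (hexp : B.exposedPoints ℝ ⊆ closure A) :
    interior B ⊆ A :=
  have hB : B ⊆ closure A := hBc.subset_closedConvexHull_exposedPoints.trans
    (closedConvexHull_min hexp hAconv.closure isClosed_closure)
  (interior_mono hB).trans hAconv.interior_closure_subset

/-- Lemma 2.1: if the closure of a convex subset `A` of a compact convex set `B`
contains all exposed points of `B`, then `A` contains the interior of `B`. -/
theorem stmt0 {m : ℕ} (B A : Set (EuclideanSpace ℝ (Fin m)))
    (hBc : IsCompact B) (hBconv : Convex ℝ B)
    (hAB : A ⊆ B) (hAconv : Convex ℝ A)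
    (hexp : B.exposedPoints ℝ ⊆ closure A) :
    interior B ⊆ A :=
  stmt0_general B A hBc hAconv hexp
end

section
/- Let M ⊆ ℝ^n be the closure of a nonempty open set, μ a measure on M absolutely continuous with respect to Lebesgue measure with density positive on M, and f : M → ℝ continuous, positive on M, attaining its maximum at a unique point s ∈ M. Then for every continuous g : M → ℝ, lim_{λ→∞} (∫_M g f^λ dμ)/(∫_M f^λ dμ) = g(s). -/
open MeasureTheory Filter
open scoped ENNReal

/-!
Laplace's method, in the form of Mathlib's peak-function theorem
`tendsto_setIntegral_pow_smul_of_unique_maximum_of_isCompact_of_measure_nhdsWithin_pos`: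
on the compact set `M`, the normalised weights `f ^ λ / ∫ f ^ λ` concentrate at the unique
maximiser `s` as soon as `μ` charges every neighbourhood of `s` in `M`. The latter holds because
`s` lies in the closure of the open set `U`, so each such neighbourhood contains a nonempty open
subset of `U`, where Lebesgue measure is positive and so is the density.
-/

section PositiveDensity

variable {α : Type*} [TopologicalSpace α] [MeasurableSpace α] [OpensMeasurableSpace α]
  {ν : Measure α} [ν.IsOpenPosMeasure] {ρ : α → ℝ≥0∞} {U M : Set α}

theorem withDensity_restrict_pos_of_isOpen (hρ : Measurable ρ) (hU : IsOpen U)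
    (hUne : U.Nonempty) (hUM : U ⊆ M) (hρpos : ∀ x ∈ U, 0 < ρ x) :
    0 < (ν.restrict M).withDensity ρ U := by
  have hU_supp : {x | ρ x ≠ 0} ∩ U = U :=
    Set.inter_eq_right.2 fun x hx => (hρpos x hx).ne'
  rw [pos_iff_ne_zero, Ne, withDensity_apply_eq_zero hρ, hU_supp,
    Measure.restrict_apply hU.measurableSet, Set.inter_eq_left.2 hUM]
  exact hU.measure_ne_zero ν hUne

theorem withDensity_restrict_inter_pos_of_mem_closure (hρ : Measurable ρ) (hU : IsOpen U)
    (hUM : U ⊆ M) (hρpos : ∀ x ∈ U, 0 < ρ x) {s : α} (hs : s ∈ closure U) {u : Set α}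
    (hu : IsOpen u) (hsu : s ∈ u) :
    0 < (ν.restrict M).withDensity ρ (u ∩ M) := by
  have huU : (u ∩ U).Nonempty := mem_closure_iff.1 hs u hu hsu
  calc 0 < (ν.restrict M).withDensity ρ (u ∩ U) :=
        withDensity_restrict_pos_of_isOpen hρ (hu.inter hU) huU
          (Set.inter_subset_right.trans hUM) fun x hx => hρpos x hx.2
    _ ≤ (ν.restrict M).withDensity ρ (u ∩ M) :=
        measure_mono (Set.inter_subset_inter_right u hUM)

end PositiveDensity

theorem stmt3_general {n : ℕ} (U M : Set (Fin n → ℝ))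
    (hU : IsOpen U) (hUb : Bornology.IsBounded U)
    (hM : M = closure U)
    (ρ : (Fin n → ℝ) → ℝ≥0∞) (hρmeas : Measurable ρ)
    (hρpos : ∀ x ∈ M, 0 < ρ x)
    (μ : Measure (Fin n → ℝ)) (hμ : μ = (volume.restrict M).withDensity ρ)
    [IsFiniteMeasure μ]
    (f : (Fin n → ℝ) → ℝ) (hfc : ContinuousOn f M)
    (hfpos : ∀ x ∈ M, 0 < f x)
    (s : Fin n → ℝ) (hs : s ∈ M) (hsmax : ∀ x ∈ M, x ≠ s → f x < f s)
    (g : (Fin n → ℝ) → ℝ) (hgc : ContinuousOn g M) :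
    Tendsto
      (fun lam : ℕ =>
        (∫ x in M, g x * (f x) ^ (lam : ℝ) ∂μ) / (∫ x in M, (f x) ^ (lam : ℝ) ∂μ))
      atTop (nhds (g s)) := by
  have hUM : U ⊆ M := hM ▸ subset_closure
  have hMc : IsCompact M := hM ▸ hUb.isCompact_closure
  have hμpos : ∀ u, IsOpen u → s ∈ u → 0 < μ (u ∩ M) := fun u hu hsu => hμ ▸
    withDensity_restrict_inter_pos_of_mem_closure hρmeas hU hUM
      (fun x hx => hρpos x (hUM hx)) (hM ▸ hs) hu hsu
  have hpeak :=
    tendsto_setIntegral_pow_smul_of_unique_maximum_of_isCompact_of_measure_nhdsWithin_pos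
      hMc hμpos hfc hsmax (fun x hx => (hfpos x hx).le) (hfpos s hs) hs
      (hgc.integrableOn_compact hMc) (hgc s hs)
  simpa only [Real.rpow_natCast, smul_eq_mul, mul_comm (g _), div_eq_inv_mul] using hpeak

/-- Lemma 2.2: `M` is the closure of a nonempty bounded open subset of `ℝ^n`,
`μ` is absolutely continuous w.r.t. Lebesgue measure with density positive on `M`,
`f` is continuous and positive on `M` with a unique maximizer `s ∈ M`.
Then for every continuous `g`, `(∫_M g f^λ dμ)/(∫_M f^λ dμ) → g(s)` as `λ → ∞`. -/
theorem stmt3 {n : ℕ} (U M : Set (Fin n → ℝ))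
    (hU : IsOpen U) (hUne : U.Nonempty) (hUb : Bornology.IsBounded U)
    (hM : M = closure U)
    (ρ : (Fin n → ℝ) → ℝ≥0∞) (hρmeas : Measurable ρ)
    (hρpos : ∀ x ∈ M, 0 < ρ x)
    (μ : Measure (Fin n → ℝ)) (hμ : μ = (volume.restrict M).withDensity ρ)
    [IsFiniteMeasure μ]
    (f : (Fin n → ℝ) → ℝ) (hfc : ContinuousOn f M)
    (hfpos : ∀ x ∈ M, 0 < f x)
    (s : Fin n → ℝ) (hs : s ∈ M) (hsmax : ∀ x ∈ M, x ≠ s → f x < f s)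
    (g : (Fin n → ℝ) → ℝ) (hgc : ContinuousOn g M) :
    Tendsto
      (fun lam : ℕ =>
        (∫ x in M, g x * (f x) ^ (lam : ℝ) ∂μ) / (∫ x in M, (f x) ^ (lam : ℝ) ∂μ))
      atTop (nhds (g s)) :=
  stmt3_general U M hU hUb hM ρ hρmeas hρpos μ hμ f hfc hfpos s hs hsmax g hgc
end

section
/- With M, μ, f as above (f continuous, 0 < f ≤ 1 on M, unique maximizer s with f(s) = 1, μ positive on nonempty open sets), for every ε > 0 the probability measures ν_λ(B) = (∫_M f^λ dμ)^{-1} ∫_B f^λ dμ satisfy lim_{λ→∞} ν_λ({x ∈ M : f(x) < 1 − ε}) = 0. -/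
open MeasureTheory Filter Topology

/-! On `{f < 1 - ε}` the integrand `f ^ k` is at most `a ^ k` with `a < 1`, while by continuity at
the maximiser `f > b > a` on a relatively open neighbourhood of positive measure, so the denominator
is at least a constant times `b ^ k`. The ratio is therefore `O((a / b) ^ k)`. -/

section PowerConcentration

variable {α : Type*} [MeasurableSpace α] {μ : Measure α} {g : α → ℝ} {a b : ℝ} {k : ℕ}

lemma setIntegral_pow_le_of_le {A : Set α} (hA : μ A ≠ ⊤) (hg0 : ∀ x ∈ A, 0 ≤ g x)
    (hgA : ∀ x ∈ A, g x ≤ a) : ∫ x in A, g x ^ k ∂μ ≤ a ^ k * μ.real A := by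
  refine (Real.le_norm_self _).trans <| norm_setIntegral_le_of_norm_le_const hA.lt_top fun x hx => ?_
  rw [Real.norm_eq_abs, abs_of_nonneg (pow_nonneg (hg0 x hx) k)]
  exact pow_le_pow_left₀ (hg0 x hx) (hgA x hx) k

lemma pow_mul_le_setIntegral_pow {M W : Set α} (hM : MeasurableSet M) (hW : MeasurableSet W)
    (hWM : W ⊆ M) (hWfin : μ W ≠ ⊤) (hg0 : ∀ x ∈ M, 0 ≤ g x)
    (hint : IntegrableOn (fun x => g x ^ k) M μ) (hb : 0 ≤ b) (hgW : ∀ x ∈ W, b ≤ g x) :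
    b ^ k * μ.real W ≤ ∫ x in M, g x ^ k ∂μ :=
  calc b ^ k * μ.real W ≤ ∫ x in W, g x ^ k ∂μ :=
        setIntegral_ge_of_const_le_real hW hWfin (fun x hx => pow_le_pow_left₀ hb (hgW x hx) k)
          (hint.mono_set hWM)
    _ ≤ ∫ x in M, g x ^ k ∂μ :=
        setIntegral_mono_set hint (ae_restrict_of_forall_mem hM fun x hx => pow_nonneg (hg0 x hx) k)
          hWM.eventuallyLE

theorem tendsto_setIntegral_pow_div_setIntegral_pow [IsFiniteMeasure μ] {M A W : Set α}
    (hM : MeasurableSet M) (hAM : A ⊆ M) (hW : MeasurableSet W) (hWM : W ⊆ M) (hWpos : 0 < μ W)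
    (hg0 : ∀ x ∈ M, 0 ≤ g x) (hint : ∀ k : ℕ, IntegrableOn (fun x => g x ^ k) M μ)
    (ha : 0 ≤ a) (hab : a < b) (hgA : ∀ x ∈ A, g x ≤ a) (hgW : ∀ x ∈ W, b ≤ g x) :
    Tendsto (fun k : ℕ => (∫ x in A, g x ^ k ∂μ) / ∫ x in M, g x ^ k ∂μ) atTop (𝓝 0) := by
  have hb : 0 < b := ha.trans_lt hab
  have hWreal : 0 < μ.real W := ENNReal.toReal_pos hWpos.ne' (measure_ne_top μ W)
  have hden : ∀ k : ℕ, b ^ k * μ.real W ≤ ∫ x in M, g x ^ k ∂μ := fun k =>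
    pow_mul_le_setIntegral_pow hM hW hWM (measure_ne_top μ W) hg0 (hint k) hb.le hgW
  have hden_pos : ∀ k : ℕ, 0 < ∫ x in M, g x ^ k ∂μ := fun k =>
    (mul_pos (pow_pos hb k) hWreal).trans_le (hden k)
  have hnum_nonneg : ∀ k : ℕ, 0 ≤ ∫ x in A, g x ^ k ∂μ := fun k =>
    integral_nonneg_of_ae <| ae_restrict_of_ae_restrict_of_subset hAM <|
      ae_restrict_of_forall_mem hM fun x hx => pow_nonneg (hg0 x hx) k
  have hgeom : Tendsto (fun k : ℕ => (a / b) ^ k * (μ.real A / μ.real W)) atTop (𝓝 0) := by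
    simpa using (tendsto_pow_atTop_nhds_zero_of_lt_one (div_nonneg ha hb.le)
      ((div_lt_one hb).2 hab)).mul_const (μ.real A / μ.real W)
  refine tendsto_of_tendsto_of_tendsto_of_le_of_le tendsto_const_nhds hgeom
    (fun k => div_nonneg (hnum_nonneg k) (hden_pos k).le) fun k => ?_
  calc (∫ x in A, g x ^ k ∂μ) / ∫ x in M, g x ^ k ∂μ
      ≤ (a ^ k * μ.real A) / (b ^ k * μ.real W) :=
        div_le_div₀ (by positivity)
          (setIntegral_pow_le_of_le (measure_ne_top μ A) (fun x hx => hg0 x (hAM hx)) hgA)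
          (by positivity) (hden k)
    _ = (a / b) ^ k * (μ.real A / μ.real W) := by
        rw [div_pow]
        field_simp

end PowerConcentration

theorem stmt4_general {n : ℕ} (U M : Set (Fin n → ℝ))
    (hM : M = closure U) (hMc : IsCompact M)
    (μ : Measure (Fin n → ℝ)) [IsFiniteMeasure μ]
    (hμpos : ∀ V : Set (Fin n → ℝ), IsOpen V → (V ∩ M).Nonempty → 0 < μ (V ∩ M))
    (f : (Fin n → ℝ) → ℝ) (hfc : ContinuousOn f M)
    (hf0 : ∀ x ∈ M, 0 < f x)
    (s : Fin n → ℝ) (hs : s ∈ M) (hfs : f s = 1) :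
    ∀ ε : ℝ, 0 < ε →
      Tendsto
        (fun lam : ℕ =>
          (∫ x in {x ∈ M | f x < 1 - ε}, (f x) ^ (lam : ℝ) ∂μ) /
            (∫ x in M, (f x) ^ (lam : ℝ) ∂μ))
        atTop (nhds 0) := by
  intro ε hε
  have hMmeas : MeasurableSet M := (hM ▸ isClosed_closure : IsClosed M).measurableSet
  set a := max (1 - ε) 0
  have ha1 : a < 1 := max_lt (by linarith) one_pos
  obtain ⟨V, hVo, hsV, hVf⟩ := mem_nhdsWithin.1 <|
    hfc s hs (Ioi_mem_nhds (show (a + 1) / 2 < f s by rw [hfs]; linarith))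
  simp only [Real.rpow_natCast]
  exact tendsto_setIntegral_pow_div_setIntegral_pow hMmeas (fun x hx => hx.1)
    (hVo.measurableSet.inter hMmeas) Set.inter_subset_right (hμpos V hVo ⟨s, hsV, hs⟩)
    (fun x hx => (hf0 x hx).le) (fun k => (hfc.pow k).integrableOn_compact hMc)
    (le_max_right _ _) (by linarith) (fun x hx => hx.2.le.trans (le_max_left _ _))
    (fun x hx => (hVf hx).le)

/-- With `M` compact (closure of an open set), `μ` a finite Borel measure positive on
nonempty relatively open subsets of `M`, and `f` continuous with `0 < f ≤ 1` on `M`,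
whose supremum `1` is attained at a unique point, the normalized measures
`ν_λ = f^λ dμ / ∫_M f^λ dμ` satisfy `ν_λ({x ∈ M : f x < 1 - ε}) → 0` for every `ε > 0`. -/
theorem stmt4 {n : ℕ} (U M : Set (Fin n → ℝ))
    (hU : IsOpen U) (hM : M = closure U) (hMc : IsCompact M)
    (μ : Measure (Fin n → ℝ)) [IsFiniteMeasure μ]
    (hμpos : ∀ V : Set (Fin n → ℝ), IsOpen V → (V ∩ M).Nonempty → 0 < μ (V ∩ M))
    (hμsupp : μ Mᶜ = 0)
    (f : (Fin n → ℝ) → ℝ) (hfc : ContinuousOn f M)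
    (hf0 : ∀ x ∈ M, 0 < f x) (hf1 : ∀ x ∈ M, f x ≤ 1)
    (s : Fin n → ℝ) (hs : s ∈ M) (hfs : f s = 1)
    (hsmax : ∀ x ∈ M, x ≠ s → f x < 1) :
    ∀ ε : ℝ, 0 < ε →
      Tendsto
        (fun lam : ℕ =>
          (∫ x in {x ∈ M | f x < 1 - ε}, (f x) ^ (lam : ℝ) ∂μ) /
            (∫ x in M, (f x) ^ (lam : ℝ) ∂μ))
        atTop (nhds 0) :=
  stmt4_general U M hM hMc μ hμpos f hfc hf0 s hs hfs
end

section
/- Let M ⊆ ℝ^n be compact, μ a finite Borel measure on M, V a finite-dimensional inner product space, and 𝓛 : ℝ^n → V continuous. Then the function f(x) = ∫_M exp⟨x, 𝓛(v)⟩ dμ(v) is convex on V, and it is strictly convex if the affine hull of 𝓛(supp μ) is all of V. -/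
open MeasureTheory
open scoped RealInnerProductSpace

/-!
Each integrand `x ↦ exp ⟪x, 𝓛 v⟫` is convex, so its integral is convex. For `x ≠ y` the integrand
is strictly convex along `[x, y]` exactly where `⟪x - y, 𝓛 v⟫ ≠ 0`; if the affine hull of
`𝓛(supp μ)` is everything, some `v ∈ supp μ` has `⟪x - y, 𝓛 v⟫ ≠ 0`, and by continuity this holds
on an open neighbourhood of `v`, which has positive measure. There the convexity inequality is
strict, so it stays strict after integration.
-/

section Integral

variable {α : Type*} [MeasurableSpace α] {μ : Measure α}

theorem integral_lt_integral_of_ae_le_of_measure_setOf_lt_ne_zero {f g : α → ℝ}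
    (hf : Integrable f μ) (hg : Integrable g μ) (hfg : f ≤ᵐ[μ] g)
    (hlt : μ {x | f x < g x} ≠ 0) : ∫ x, f x ∂μ < ∫ x, g x ∂μ := by
  have hpos : 0 < ∫ x, (g x - f x) ∂μ := by
    refine (integral_pos_iff_support_of_nonneg_ae ?_ (hg.sub hf)).2 ?_
    · filter_upwards [hfg] with x hx using sub_nonneg.2 hx
    · refine pos_iff_ne_zero.2 fun h => hlt (measure_mono_null ?_ h)
      intro x (hx : f x < g x)
      exact (sub_pos.2 hx).ne'
  rw [integral_sub hg hf] at hpos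
  linarith

theorem integral_smul_add_smul {f g : α → ℝ} (hf : Integrable f μ) (hg : Integrable g μ)
    (a b : ℝ) : ∫ x, (a • f x + b • g x) ∂μ = a • ∫ x, f x ∂μ + b • ∫ x, g x ∂μ := by
  rw [integral_add (f := fun x => a • f x) (g := fun x => b • g x) (hf.smul a) (hg.smul b),
    integral_smul, integral_smul]

variable {E : Type*} [AddCommGroup E] [Module ℝ E] {s : Set E} {F : E → α → ℝ}

theorem ConvexOn.integral (hs : Convex ℝ s) (hF : ∀ v, ConvexOn ℝ s (F · v))
    (hint : ∀ x ∈ s, Integrable (F x) μ) : ConvexOn ℝ s fun x => ∫ v, F x v ∂μ := by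
  refine ⟨hs, fun x hx y hy a b ha hb hab => ?_⟩
  calc ∫ v, F (a • x + b • y) v ∂μ
      ≤ ∫ v, (a • F x v + b • F y v) ∂μ :=
        integral_mono (hint _ (hs hx hy ha hb hab)) (((hint x hx).smul a).add ((hint y hy).smul b))
          fun v => (hF v).2 hx hy ha hb hab
    _ = a • ∫ v, F x v ∂μ + b • ∫ v, F y v ∂μ := integral_smul_add_smul (hint x hx) (hint y hy) a b

theorem StrictConvexOn.integral (hs : Convex ℝ s) (hF : ∀ v, ConvexOn ℝ s (F · v))
    (hint : ∀ x ∈ s, Integrable (F x) μ)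
    (hstrict : ∀ x ∈ s, ∀ y ∈ s, x ≠ y → ∀ a b : ℝ, 0 < a → 0 < b → a + b = 1 →
      μ {v | F (a • x + b • y) v < a • F x v + b • F y v} ≠ 0) :
    StrictConvexOn ℝ s fun x => ∫ v, F x v ∂μ := by
  refine ⟨hs, fun x hx y hy hxy a b ha hb hab => ?_⟩
  calc ∫ v, F (a • x + b • y) v ∂μ
      < ∫ v, (a • F x v + b • F y v) ∂μ :=
        integral_lt_integral_of_ae_le_of_measure_setOf_lt_ne_zero
          (hint _ (hs hx hy ha.le hb.le hab)) (((hint x hx).smul a).add ((hint y hy).smul b))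
          (.of_forall fun v => (hF v).2 hx hy ha.le hb.le hab) (hstrict x hx y hy hxy a b ha hb hab)
    _ = a • ∫ v, F x v ∂μ + b • ∫ v, F y v ∂μ := integral_smul_add_smul (hint x hx) (hint y hy) a b

end Integral

section ExpInner

variable {V : Type*} [NormedAddCommGroup V] [InnerProductSpace ℝ V]

theorem convexOn_exp_inner (w : V) : ConvexOn ℝ Set.univ fun x => Real.exp ⟪x, w⟫ := by
  simpa only [Set.preimage_univ, Function.comp_def, innerₛₗ_apply_apply, real_inner_comm w] using
    convexOn_exp.comp_linearMap (innerₛₗ ℝ w)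

theorem exp_inner_lt_of_inner_sub_ne_zero {x y w : V} (hw : ⟪x - y, w⟫ ≠ 0) {a b : ℝ}
    (ha : 0 < a) (hb : 0 < b) (hab : a + b = 1) :
    Real.exp ⟪a • x + b • y, w⟫ < a • Real.exp ⟪x, w⟫ + b • Real.exp ⟪y, w⟫ := by
  have hne : ⟪x, w⟫ ≠ ⟪y, w⟫ := fun h => hw (by rw [inner_sub_left, h, sub_self])
  simpa only [inner_add_left, real_inner_smul_left, smul_eq_mul] using
    strictConvexOn_exp.2 (Set.mem_univ _) (Set.mem_univ _) hne ha hb hab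

theorem exists_inner_ne_zero_of_affineSpan_eq_top {S : Set V} (hS : affineSpan ℝ S = ⊤) {u : V}
    (hu : u ≠ 0) : ∃ w ∈ S, ⟪u, w⟫ ≠ 0 := by
  by_contra! h
  have hker : S ⊆ (LinearMap.ker (innerₛₗ ℝ u)).toAffineSubspace := h
  have hu_mem : u ∈ LinearMap.ker (innerₛₗ ℝ u) :=
    affineSpan_le.2 hker (hS ▸ AffineSubspace.mem_top ℝ V u)
  exact hu (by simpa using hu_mem)

variable {α : Type*} [MeasurableSpace α] {μ : Measure α} {ℓ : α → V}

theorem convexOn_integral_exp_inner (hint : ∀ x, Integrable (fun v => Real.exp ⟪x, ℓ v⟫) μ) :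
    ConvexOn ℝ Set.univ fun x => ∫ v, Real.exp ⟪x, ℓ v⟫ ∂μ :=
  ConvexOn.integral convex_univ (fun v => convexOn_exp_inner (ℓ v)) fun x _ => hint x

theorem strictConvexOn_integral_exp_inner
    (hint : ∀ x, Integrable (fun v => Real.exp ⟪x, ℓ v⟫) μ)
    (hℓ : ∀ u ≠ 0, μ {v | ⟪u, ℓ v⟫ ≠ 0} ≠ 0) :
    StrictConvexOn ℝ Set.univ fun x => ∫ v, Real.exp ⟪x, ℓ v⟫ ∂μ :=
  StrictConvexOn.integral convex_univ (fun v => convexOn_exp_inner (ℓ v)) (fun x _ => hint x)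
    fun x _ y _ hxy _ _ ha hb hab h => hℓ (x - y) (sub_ne_zero.2 hxy) <|
      measure_mono_null (fun _ hv => exp_inner_lt_of_inner_sub_ne_zero hv ha hb hab) h

end ExpInner

/-- The function `f(x) = ∫_M exp⟨x, 𝓛(v)⟩ dμ(v)` is convex, and strictly convex
provided the affine hull of `𝓛(supp μ ∩ M)` is all of `V = ℝ^m`. -/
theorem stmt5 {n m : ℕ} (M : Set (Fin n → ℝ)) (hM : IsCompact M)
    (μ : Measure (Fin n → ℝ)) [IsFiniteMeasure μ] (hμsupp : μ Mᶜ = 0)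
    (L : (Fin n → ℝ) → EuclideanSpace ℝ (Fin m)) (hL : Continuous L)
    (f : EuclideanSpace ℝ (Fin m) → ℝ)
    (hf : ∀ x, f x = ∫ v in M, Real.exp ⟪x, L v⟫ ∂μ) :
    ConvexOn ℝ Set.univ f ∧
      (affineSpan ℝ
          (L '' (M ∩ {v | ∀ V : Set (Fin n → ℝ), IsOpen V → v ∈ V → 0 < μ V})) = ⊤ →
        StrictConvexOn ℝ Set.univ f) := by
  have hμM : μ.restrict M = μ := Measure.restrict_eq_self_of_ae_mem (mem_ae_iff.2 hμsupp)
  have hcont : ∀ x, Continuous fun v => ⟪x, L v⟫ := fun x => continuous_const.inner hL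
  have hint : ∀ x, Integrable (fun v => Real.exp ⟪x, L v⟫) μ := fun x => by
    rw [← hμM]
    exact (hcont x).rexp.continuousOn.integrableOn_compact hM
  obtain rfl : f = fun x => ∫ v, Real.exp ⟪x, L v⟫ ∂μ := funext fun x => by rw [hf, hμM]
  refine ⟨convexOn_integral_exp_inner hint, fun hspan => strictConvexOn_integral_exp_inner hint ?_⟩
  intro u hu
  obtain ⟨_, ⟨v, ⟨-, hv⟩, rfl⟩, huv⟩ := exists_inner_ne_zero_of_affineSpan_eq_top hspan hu
  exact (hv _ (isOpen_ne_fun (hcont u) continuous_const) huv).ne'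
end

section
/- Let M ⊆ ℝ^n be compact, the closure of an open set, μ absolutely continuous w.r.t. Lebesgue measure with positive density on M, 𝓛 : ℝ^n → V continuous with 𝓛(M) contained in an affine hyperplane not through the origin, and suppose the affine hull of 𝓛(M) is that hyperplane. Then the image of the gradient map ∇f of f(x) = ∫_M e^{⟨x,𝓛(v)⟩} dμ(v) equals the interior of the conical hull of 𝓛(M). -/
/-!
Let `ν` be `μ` restricted to `M`; then `M` is the support of `ν`. Let `C` be the cone generated by
`𝓛(M)`. As `𝓛(M)` affinely spans a hyperplane missing the origin, it linearly spans the whole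
space, so `C` has nonempty interior. Differentiating under the integral sign,
`∇f(x) = ∫ e^{⟨x, 𝓛v⟩} 𝓛v dν(v)`.

If `∇f(x)` is not interior to `C`, some functional `φ ≤ 0` on `C` has `φ(∇f(x)) ≥ 0`. Then
`e^{⟨x, 𝓛v⟩} φ(𝓛v)` is continuous, nonpositive and has nonnegative integral, so it vanishes on the
support `M`; hence `φ` vanishes on `𝓛(M)`, so `φ = 0`, which is impossible.

Conversely, let `y` be interior to `C`. The convex function `g = f - ⟨y, ·⟩` tends to infinity
along every ray `t ↦ t d`: exponentially if `⟨d, 𝓛v⟩ > 0` for some `v ∈ M` (this holds on a set of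
positive measure), and linearly otherwise, since then `⟨d, ·⟩ ≤ 0` on `C` forces `⟨d, y⟩ < 0`.
Compactness of the unit sphere and convexity make `g` coercive, and a minimiser `x` of `g`
satisfies `∇f(x) = y`.
-/
open MeasureTheory
open scoped RealInnerProductSpace ENNReal

/-- The conical hull of a set: all finite nonnegative combinations of its elements. -/
def conicalHull {V : Type*} [AddCommMonoid V] [Module ℝ V] (s : Set V) : Set V :=
  {y | ∃ (k : ℕ) (c : Fin k → ℝ) (z : Fin k → V),
    (∀ i, 0 ≤ c i) ∧ (∀ i, z i ∈ s) ∧ y = ∑ i, c i • z i}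

open Set Filter Topology

theorem conicalHull_eq_hull {V : Type*} [AddCommGroup V] [Module ℝ V] (s : Set V) :
    conicalHull s = PointedCone.hull ℝ s := by
  ext y
  simp only [conicalHull, mem_ofPred_eq, SetLike.mem_coe, PointedCone.hull, Submodule.mem_span_set']
  constructor
  · rintro ⟨k, c, z, hc, hz, rfl⟩
    exact ⟨k, fun i => ⟨c i, hc i⟩, fun i => ⟨z i, hz i⟩, by simp⟩
  · rintro ⟨k, c, z, rfl⟩
    exact ⟨k, fun i => c i, fun i => z i, fun i => (c i).2, fun i => (z i).2, by simp⟩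

section LinearCone

variable {E : Type*} [AddCommGroup E] [Module ℝ E]

theorem PointedCone.apply_nonpos_of_forall_le (C : PointedCone ℝ E) (φ : E →ₗ[ℝ] ℝ) {c : ℝ}
    (h : ∀ z ∈ C, φ z ≤ c) {z : E} (hz : z ∈ C) : φ z ≤ 0 := by
  by_contra! hpos
  obtain ⟨n, hn⟩ := exists_lt_nsmul hpos c
  have := h _ (C.nsmul_mem hz n)
  rw [map_nsmul] at this
  linarith

theorem PointedCone.apply_nonpos_of_mem_hull {s : Set E} (φ : E →ₗ[ℝ] ℝ) (hφ : ∀ z ∈ s, φ z ≤ 0)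
    {z : E} (hz : z ∈ PointedCone.hull ℝ s) : φ z ≤ 0 := by
  induction hz using Submodule.span_induction with
  | mem z hz => exact hφ z hz
  | zero => simp
  | add x y _ _ hx hy => rw [map_add]; linarith
  | smul c x _ hx =>
    change φ ((c : ℝ) • x) ≤ 0
    rw [map_smul, smul_eq_mul]
    exact mul_nonpos_of_nonneg_of_nonpos c.2 hx

end LinearCone

section Cone

variable {E : Type*} [NormedAddCommGroup E] [NormedSpace ℝ E]

theorem PointedCone.apply_neg_of_mem_interior (C : PointedCone ℝ E) {φ : E →L[ℝ] ℝ} (hφ : φ ≠ 0)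
    (hC : ∀ z ∈ C, φ z ≤ 0) {y : E} (hy : y ∈ interior (C : Set E)) : φ y < 0 := by
  have : φ '' interior (C : Set E) ⊆ interior (Iic 0) :=
    interior_maximal (image_subset_iff.2 fun z hz => hC z (interior_subset hz))
      (φ.isOpenMap_of_ne_zero hφ _ isOpen_interior)
  simpa using this (mem_image_of_mem φ hy)

theorem PointedCone.mem_interior_of_forall_dual (C : PointedCone ℝ E)
    (hC : (interior (C : Set E)).Nonempty) {y : E}
    (h : ∀ φ : E →L[ℝ] ℝ, (∀ z ∈ C, φ z ≤ 0) → 0 ≤ φ y → φ = 0) : y ∈ interior (C : Set E) := by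
  by_contra hy
  obtain ⟨φ, hφ⟩ := geometric_hahn_banach_open_point C.convex.interior isOpen_interior hy
  have hle : ∀ z ∈ C, φ z ≤ φ y := by
    intro z hz
    have hz' : z ∈ closure (interior (C : Set E)) := by
      rw [C.convex.closure_interior_eq_closure_of_nonempty_interior hC]
      exact subset_closure hz
    exact closure_minimal (fun a ha => (hφ a ha).le) (isClosed_le φ.continuous continuous_const) hz'
  have hφ₀ : φ = 0 :=
    h φ (fun z hz => C.apply_nonpos_of_forall_le φ hle hz) (by simpa using hle 0 C.zero_mem)
  obtain ⟨w, hw⟩ := hC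
  simpa [hφ₀] using hφ w hw

theorem PointedCone.interior_hull_nonempty [FiniteDimensional ℝ E] {s : Set E}
    (hs : Submodule.span ℝ s = ⊤) : (interior (PointedCone.hull ℝ s : Set E)).Nonempty := by
  rw [(PointedCone.hull ℝ s).convex.interior_nonempty_iff_affineSpan_eq_top, ← SetLike.coe_set_eq,
    ← insert_eq_of_mem (PointedCone.hull ℝ s).zero_mem, affineSpan_insert_zero,
    Submodule.span_span_of_tower, hs]
  rfl

end Cone

theorem span_eq_top_of_affineSpan_eq {E : Type*} [NormedAddCommGroup E] [InnerProductSpace ℝ E]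
    {s : Set E} (hs : s.Nonempty) {h : E} (haff : (affineSpan ℝ s : Set E) = {x | ⟪h, x⟫ = 1}) :
    Submodule.span ℝ s = ⊤ := by
  obtain ⟨x₀, hx₀⟩ := hs
  have hmem : ∀ x, ⟪h, x⟫ = 1 → x ∈ Submodule.span ℝ s := fun x hx =>
    affineSpan_subset_span (haff ▸ hx)
  have h₀ : ⟪h, x₀⟫ = 1 := (haff ▸ subset_affineSpan ℝ s hx₀ : x₀ ∈ {x | ⟪h, x⟫ = 1})
  refine Submodule.eq_top_iff'.2 fun x => ?_
  have ha : ⟪h, x₀ + (x - ⟪h, x⟫ • x₀)⟫ = 1 := by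
    simp [inner_add_right, inner_sub_right, real_inner_smul_right, h₀]
  have hx : x = (x₀ + (x - ⟪h, x⟫ • x₀)) - x₀ + ⟪h, x⟫ • x₀ := by abel
  rw [hx]
  exact add_mem (sub_mem (hmem _ ha) (hmem _ h₀)) (Submodule.smul_mem _ _ (hmem _ h₀))

section Convex

variable {E : Type*} [NormedAddCommGroup E] [NormedSpace ℝ E] {g : E → ℝ}

theorem ConvexOn.lt_apply_smul_of_lt (hg : ConvexOn ℝ univ g) {x : E} (hx : g 0 < g x) {t : ℝ}
    (ht : 1 ≤ t) : g 0 < g (t • x) := by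
  by_contra! h
  have ht₀ : 0 < t := one_pos.trans_le ht
  have := hg.2 (mem_univ (t • x)) (mem_univ 0) (inv_nonneg.2 ht₀.le)
    (sub_nonneg.2 (inv_le_one_of_one_le₀ ht)) (add_sub_cancel _ _)
  rw [smul_zero, add_zero, smul_smul, inv_mul_cancel₀ ht₀.ne', one_smul, smul_eq_mul,
    smul_eq_mul] at this
  nlinarith [inv_nonneg.2 ht₀.le, inv_le_one_of_one_le₀ ht]

theorem ConvexOn.exists_forall_le_of_forall_ray [ProperSpace E] (hg : ConvexOn ℝ univ g)
    (hcont : Continuous g) (hray : ∀ d : E, d ≠ 0 → ∃ t : ℝ, 0 < t ∧ g 0 < g (t • d)) :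
    ∃ x, ∀ y, g x ≤ g y := by
  -- finitely many of the open sets `{e | g 0 < g (t d • e)}` cover the unit sphere, and beyond
  -- the largest of their radii `t d`, convexity gives `g 0 < g`
  choose! t ht hgt using hray
  have hne : ∀ d ∈ Metric.sphere (0 : E) 1, d ≠ 0 := by rintro d hd rfl; simp at hd
  have hcover : Metric.sphere (0 : E) 1 ⊆ ⋃ d ∈ Metric.sphere (0 : E) 1, {e | g 0 < g (t d • e)} :=
    fun d hd => mem_biUnion hd (hgt d (hne d hd))
  obtain ⟨b, hbS, hb, hbcover⟩ := (isCompact_sphere (0 : E) 1).elim_finite_subcover_image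
    (fun d _ => isOpen_lt continuous_const (hcont.comp (continuous_const_smul _))) hcover
  obtain ⟨T, hT⟩ := (hb.image t).bddAbove
  refine hcont.exists_forall_le' 0 ?_
  filter_upwards [tendsto_norm_cocompact_atTop.eventually (eventually_gt_atTop (max T 0))]
    with x hx
  have hx₀ : 0 < ‖x‖ := (le_max_right _ _).trans_lt hx
  obtain ⟨d, hd, hlt⟩ := mem_iUnion₂.1 (hbcover
    (show ‖x‖⁻¹ • x ∈ Metric.sphere (0 : E) 1 by simp [norm_smul, hx₀.ne']))
  have htd₀ : 0 < t d := ht d (hne d (hbS hd))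
  have htd : t d ≤ ‖x‖ := (hT (mem_image_of_mem t hd)).trans ((le_max_left _ _).trans hx.le)
  have hscale : (‖x‖ / t d) • t d • ‖x‖⁻¹ • x = x := by
    rw [smul_smul, smul_smul, div_mul_cancel₀ _ htd₀.ne', mul_inv_cancel₀ hx₀.ne', one_smul]
  have := hg.lt_apply_smul_of_lt hlt ((one_le_div htd₀).2 htd)
  rw [hscale] at this
  exact this.le

end Convex

theorem tendsto_mul_exp_sub_mul_atTop {c ε : ℝ} (hc : 0 < c) (hε : 0 < ε) (a : ℝ) :
    Tendsto (fun t => c * Real.exp (ε * t) - a * t) atTop atTop := by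
  have hquad : Tendsto (fun t => t * (c * ε ^ 2 / 2 * t - a)) atTop atTop :=
    tendsto_id.atTop_mul_atTop₀
      (tendsto_atTop_add_const_right _ _ (tendsto_id.const_mul_atTop (by positivity)))
  refine tendsto_atTop_mono' _ ?_ hquad
  filter_upwards [eventually_ge_atTop 0] with t ht
  have := Real.quadratic_le_exp_of_nonneg (mul_nonneg hε.le ht)
  nlinarith [mul_le_mul_of_nonneg_left this hc.le, mul_nonneg hc.le (mul_nonneg hε.le ht)]

section ExpIntegral

variable {X : Type*} [MeasurableSpace X] {E : Type*} [NormedAddCommGroup E] [InnerProductSpace ℝ E]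
  {μ : Measure X} [IsFiniteMeasure μ] {L : X → E} {R : ℝ}

theorem integrable_exp_inner (hL : AEStronglyMeasurable L μ) (hR : ∀ᵐ v ∂μ, ‖L v‖ ≤ R) (x : E) :
    Integrable (fun v => Real.exp ⟪x, L v⟫) μ := by
  refine .of_bound (by fun_prop) (Real.exp (‖x‖ * R)) (hR.mono fun v hv => ?_)
  rw [Real.norm_eq_abs, Real.abs_exp, Real.exp_le_exp]
  exact (real_inner_le_norm _ _).trans (mul_le_mul_of_nonneg_left hv (norm_nonneg x))

theorem integrable_exp_inner_smul (hL : AEStronglyMeasurable L μ) (hR : ∀ᵐ v ∂μ, ‖L v‖ ≤ R)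
    (x : E) : Integrable (fun v => Real.exp ⟪x, L v⟫ • L v) μ :=
  (integrable_exp_inner hL hR x).smul_of_top_left (memLp_top_of_bound hL R hR)

theorem hasGradientAt_exp_inner [CompleteSpace E] (a x : E) :
    HasGradientAt (fun x => Real.exp ⟪x, a⟫) (Real.exp ⟪x, a⟫ • a) x := by
  rw [hasGradientAt_iff_hasFDerivAt, map_smul]
  simp_rw [real_inner_comm a]
  exact (InnerProductSpace.toDual ℝ E a).hasFDerivAt.exp

theorem hasGradientAt_integral_exp_inner [CompleteSpace E] (hL : AEStronglyMeasurable L μ)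
    (hR : ∀ᵐ v ∂μ, ‖L v‖ ≤ R) (x₀ : E) :
    HasGradientAt (fun x => ∫ v, Real.exp ⟪x, L v⟫ ∂μ) (∫ v, Real.exp ⟪x₀, L v⟫ • L v ∂μ) x₀ := by
  have hcomm : InnerProductSpace.toDual ℝ E (∫ v, Real.exp ⟪x₀, L v⟫ • L v ∂μ)
      = ∫ v, InnerProductSpace.toDual ℝ E (Real.exp ⟪x₀, L v⟫ • L v) ∂μ :=
    ((InnerProductSpace.toDual ℝ E).toLinearIsometry.integral_comp_comm _).symm
  rw [hasGradientAt_iff_hasFDerivAt, hcomm]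
  refine hasFDerivAt_integral_of_dominated_of_fderiv_le (Metric.ball_mem_nhds x₀ one_pos)
    (bound := fun _ => Real.exp ((‖x₀‖ + 1) * R) * R) (.of_forall fun x => by fun_prop)
    (integrable_exp_inner hL hR x₀) (by fun_prop) ?_ (integrable_const _)
    (.of_forall fun v x _ => hasGradientAt_iff_hasFDerivAt.1 (hasGradientAt_exp_inner (L v) x))
  filter_upwards [hR] with v hv x hx
  have hx : ‖x‖ ≤ ‖x₀‖ + 1 := by
    have := norm_le_norm_add_norm_sub' x x₀
    rw [← dist_eq_norm] at this
    linarith [Metric.mem_ball.1 hx]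
  have hR₀ : 0 ≤ R := (norm_nonneg _).trans hv
  rw [LinearIsometryEquiv.norm_map, norm_smul, Real.norm_eq_abs, Real.abs_exp]
  gcongr
  exact (real_inner_le_norm _ _).trans (mul_le_mul hx hv (norm_nonneg _) (by positivity))

theorem convexOn_integral_exp_inner_s8 (hL : AEStronglyMeasurable L μ) (hR : ∀ᵐ v ∂μ, ‖L v‖ ≤ R) :
    ConvexOn ℝ univ fun x => ∫ v, Real.exp ⟪x, L v⟫ ∂μ := by
  refine ⟨convex_univ, fun x _ y _ a b ha hb hab => ?_⟩
  have hint := integrable_exp_inner hL hR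
  calc ∫ v, Real.exp ⟪a • x + b • y, L v⟫ ∂μ
      ≤ ∫ v, (a * Real.exp ⟪x, L v⟫ + b * Real.exp ⟪y, L v⟫) ∂μ := by
        refine integral_mono (hint _) (((hint x).const_mul a).add ((hint y).const_mul b))
          fun v => ?_
        simpa [inner_add_left, real_inner_smul_left] using
          convexOn_exp.2 (mem_univ ⟪x, L v⟫) (mem_univ ⟪y, L v⟫) ha hb hab
    _ = a • ∫ v, Real.exp ⟪x, L v⟫ ∂μ + b • ∫ v, Real.exp ⟪y, L v⟫ ∂μ := by
        rw [integral_add ((hint x).const_mul a) ((hint y).const_mul b), integral_const_mul,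
          integral_const_mul, smul_eq_mul, smul_eq_mul]

end ExpIntegral

namespace MeasureTheory

variable {X : Type*} [TopologicalSpace X] [MeasurableSpace X]

theorem Measure.support_withDensity {μ : Measure X} {f : X → ℝ≥0∞} (hf : AEMeasurable f μ)
    (hf₀ : ∀ᵐ x ∂μ, f x ≠ 0) : (μ.withDensity f).support = μ.support :=
  (withDensity_absolutelyContinuous μ f).support_mono.antisymm
    (withDensity_absolutelyContinuous' hf hf₀).support_mono

theorem Measure.support_restrict_closure [OpensMeasurableSpace X] (μ : Measure X)
    [μ.IsOpenPosMeasure] {U : Set X} (hU : IsOpen U) :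
    (μ.restrict (closure U)).support = closure U := by
  refine (Measure.support_restrict_subset.trans ?_).antisymm (closure_minimal (fun x hx => ?_)
    Measure.isClosed_support)
  · rw [closure_closure]
    exact inter_subset_left
  · exact Measure.interior_inter_support ⟨interior_mono subset_closure (hU.interior_eq.symm ▸ hx),
      Measure.support_eq_univ (μ := μ) ▸ mem_univ x⟩

theorem integral_pos_of_mem_support {μ : Measure X} {g : X → ℝ} (hg : Continuous g)
    (hg₀ : 0 ≤ᵐ[μ] g) (hint : Integrable g μ) {v : X} (hv : v ∈ μ.support) (hgv : 0 < g v) :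
    0 < ∫ x, g x ∂μ := by
  rw [integral_pos_iff_support_of_nonneg_ae hg₀ hint]
  exact (Measure.mem_support_iff_forall v).1 hv _ (hg.isOpen_support.mem_nhds hgv.ne')

theorem exists_ae_norm_le_of_isCompact_support [HereditarilyLindelofSpace X] {F : Type*}
    [NormedAddCommGroup F] {μ : Measure X} {L : X → F} (hL : Continuous L)
    (hK : IsCompact μ.support) : ∃ R, ∀ᵐ v ∂μ, ‖L v‖ ≤ R := by
  obtain ⟨R, hR⟩ := hK.exists_bound_of_continuousOn hL.continuousOn
  exact ⟨R, mem_of_superset Measure.support_mem_ae hR⟩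

end MeasureTheory

section CompactSupport

variable {X : Type*} [TopologicalSpace X] [MeasurableSpace X] [OpensMeasurableSpace X]
  [HereditarilyLindelofSpace X] {E : Type*} [NormedAddCommGroup E] [InnerProductSpace ℝ E]
  [FiniteDimensional ℝ E] {μ : Measure X} [IsFiniteMeasure μ] {L : X → E}

theorem integral_exp_inner_smul_mem_interior (hL : Continuous L) (hK : IsCompact μ.support)
    (hspan : Submodule.span ℝ (L '' μ.support) = ⊤) (x : E) :
    ∫ v, Real.exp ⟪x, L v⟫ • L v ∂μ ∈ interior (PointedCone.hull ℝ (L '' μ.support) : Set E) := by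
  obtain ⟨R, hR⟩ := exists_ae_norm_le_of_isCompact_support hL hK
  refine (PointedCone.hull ℝ _).mem_interior_of_forall_dual
    (PointedCone.interior_hull_nonempty hspan) fun φ hφ hy => ?_
  have hint : Integrable (fun v => Real.exp ⟪x, L v⟫ * φ (L v)) μ := by
    simpa using φ.integrable_comp (integrable_exp_inner_smul hL.aestronglyMeasurable hR x)
  rw [← φ.integral_comp_comm (integrable_exp_inner_smul hL.aestronglyMeasurable hR x)] at hy
  simp only [map_smul, smul_eq_mul] at hy
  have hφL : ∀ v ∈ μ.support, φ (L v) = 0 := by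
    intro v hv
    refine le_antisymm (hφ _ (PointedCone.subset_hull (mem_image_of_mem L hv))) ?_
    by_contra! hlt
    have hpos := integral_pos_of_mem_support (by fun_prop)
      (mem_of_superset Measure.support_mem_ae fun w hw => neg_nonneg.2 <|
        mul_nonpos_of_nonneg_of_nonpos (Real.exp_pos _).le
          (hφ _ (PointedCone.subset_hull (mem_image_of_mem L hw))))
      hint.neg hv (neg_pos.2 (mul_neg_of_pos_of_neg (Real.exp_pos _) hlt))
    rw [integral_neg] at hpos
    linarith
  exact ContinuousLinearMap.coe_injective (LinearMap.ext_on hspan fun z ⟨v, hv, hz⟩ => by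
    simp [← hz, hφL v hv])

theorem tendsto_integral_exp_inner_sub_inner (hL : Continuous L) (hK : IsCompact μ.support)
    {y : E} (hy : y ∈ interior (PointedCone.hull ℝ (L '' μ.support) : Set E)) {d : E} (hd : d ≠ 0) :
    Tendsto (fun t : ℝ => ∫ v, Real.exp ⟪t • d, L v⟫ ∂μ - ⟪y, t • d⟫) atTop atTop := by
  obtain ⟨R, hR⟩ := exists_ae_norm_le_of_isCompact_support hL hK
  have hint := integrable_exp_inner hL.aestronglyMeasurable hR
  simp_rw [real_inner_smul_left, real_inner_smul_right]
  by_cases hcase : ∃ v ∈ μ.support, 0 < ⟪d, L v⟫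
  · obtain ⟨v₀, hv₀, hpos⟩ := hcase
    set A := {v | ⟪d, L v₀⟫ / 2 < ⟪d, L v⟫}
    have hAopen : IsOpen A := isOpen_lt continuous_const (by fun_prop)
    have hA : 0 < μ.real A := ENNReal.toReal_pos ((Measure.mem_support_iff_forall v₀).1 hv₀ A
      (hAopen.mem_nhds (half_lt_self hpos))).ne' (measure_ne_top μ A)
    refine tendsto_atTop_mono' _ ?_ (tendsto_mul_exp_sub_mul_atTop hA (half_pos hpos) ⟪y, d⟫)
    filter_upwards [eventually_ge_atTop 0] with t ht
    have hint' : Integrable (fun v => Real.exp (t * ⟪d, L v⟫)) μ := by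
      simpa only [real_inner_smul_left] using hint (t • d)
    have hA_le : Real.exp (⟪d, L v₀⟫ / 2 * t) * μ.real A ≤ ∫ v in A, Real.exp (t * ⟪d, L v⟫) ∂μ :=
      setIntegral_ge_of_const_le_real hAopen.measurableSet (measure_ne_top μ A)
        (fun v hv => Real.exp_le_exp.2 (by rw [mul_comm]; exact mul_le_mul_of_nonneg_left hv.le ht))
        hint'.integrableOn
    have hA_sub : ∫ v in A, Real.exp (t * ⟪d, L v⟫) ∂μ ≤ ∫ v, Real.exp (t * ⟪d, L v⟫) ∂μ :=
      setIntegral_le_integral hint' (.of_forall fun v => (Real.exp_pos _).le)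
    linarith
  · push Not at hcase
    have hneg : ⟪d, y⟫ < 0 := PointedCone.apply_neg_of_mem_interior _
      (φ := innerSL ℝ d)
      (norm_ne_zero_iff.1 (by rwa [innerSL_apply_norm, norm_ne_zero_iff]))
      (fun z hz => PointedCone.apply_nonpos_of_mem_hull (innerSL ℝ d : E →ₗ[ℝ] ℝ)
        (by rintro _ ⟨v, hv, rfl⟩; exact hcase v hv) hz) hy
    rw [real_inner_comm] at hneg
    refine tendsto_atTop_mono (fun t => ?_) (tendsto_id.atTop_mul_const (neg_pos.2 hneg))
    have : 0 ≤ ∫ v, Real.exp (t * ⟪d, L v⟫) ∂μ := integral_nonneg fun v => (Real.exp_pos _).le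
    rw [id]
    linarith

theorem exists_integral_exp_inner_smul_eq (hL : Continuous L) (hK : IsCompact μ.support) {y : E}
    (hy : y ∈ interior (PointedCone.hull ℝ (L '' μ.support) : Set E)) :
    ∃ x, ∫ v, Real.exp ⟪x, L v⟫ • L v ∂μ = y := by
  obtain ⟨R, hR⟩ := exists_ae_norm_le_of_isCompact_support hL hK
  set g : E → ℝ := fun x => ∫ v, Real.exp ⟪x, L v⟫ ∂μ - ⟪y, x⟫
  have hderiv : ∀ x, HasFDerivAt g (InnerProductSpace.toDual ℝ E
      (∫ v, Real.exp ⟪x, L v⟫ • L v ∂μ - y)) x := fun x => by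
    rw [map_sub]
    exact (hasGradientAt_integral_exp_inner hL.aestronglyMeasurable hR x).hasFDerivAt.sub
      (InnerProductSpace.toDual ℝ E y).hasFDerivAt
  have hconv : ConvexOn ℝ univ g := (convexOn_integral_exp_inner_s8 hL.aestronglyMeasurable hR).sub
    ((innerₛₗ ℝ y).concaveOn convex_univ)
  obtain ⟨x, hx⟩ := hconv.exists_forall_le_of_forall_ray
    (continuous_iff_continuousAt.2 fun x => (hderiv x).continuousAt) fun d hd =>
      (((tendsto_integral_exp_inner_sub_inner hL hK hy hd).eventually_gt_atTop (g 0)).and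
        (eventually_gt_atTop 0)).exists.imp fun t ht => ⟨ht.2, ht.1⟩
  refine ⟨x, sub_eq_zero.1 ?_⟩
  exact (InnerProductSpace.toDual ℝ E).injective
    ((IsLocalMin.hasFDerivAt_eq_zero (.of_forall hx) (hderiv x)).trans (map_zero _).symm)

theorem range_gradient_integral_exp_inner (hL : Continuous L) (hK : IsCompact μ.support)
    (hspan : Submodule.span ℝ (L '' μ.support) = ⊤) :
    range (gradient fun x => ∫ v, Real.exp ⟪x, L v⟫ ∂μ)
      = interior (PointedCone.hull ℝ (L '' μ.support) : Set E) := by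
  obtain ⟨R, hR⟩ := exists_ae_norm_le_of_isCompact_support hL hK
  rw [gradient_eq (hasGradientAt_integral_exp_inner hL.aestronglyMeasurable hR)]
  exact Subset.antisymm (range_subset_iff.2 (integral_exp_inner_smul_mem_interior hL hK hspan))
    fun y hy => exists_integral_exp_inner_smul_eq hL hK hy

end CompactSupport

theorem stmt8_general {n m : ℕ} (U M : Set (Fin n → ℝ))
    (hU : IsOpen U) (hUne : U.Nonempty) (hUb : Bornology.IsBounded U)
    (hM : M = closure U)
    (ρ : (Fin n → ℝ) → ℝ≥0∞) (hρmeas : Measurable ρ)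
    (hρpos : ∀ x ∈ M, 0 < ρ x)
    (μ : Measure (Fin n → ℝ)) (hμ : μ = (volume.restrict M).withDensity ρ)
    [IsFiniteMeasure μ]
    (L : (Fin n → ℝ) → EuclideanSpace ℝ (Fin m)) (hL : Continuous L)
    (h : EuclideanSpace ℝ (Fin m))
    (haff : (affineSpan ℝ (L '' M) : Set (EuclideanSpace ℝ (Fin m)))
      = {x | ⟪h, x⟫ = 1})
    (f : EuclideanSpace ℝ (Fin m) → ℝ)
    (hf : ∀ x, f x = ∫ v in M, Real.exp ⟪x, L v⟫ ∂μ) :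
    Set.range (gradient f) = interior (conicalHull (L '' M)) := by
  subst hM
  have hMmeas : MeasurableSet (closure U) := isClosed_closure.measurableSet
  have hsupp : μ.support = closure U := by
    rw [hμ, Measure.support_withDensity hρmeas.aemeasurable
      (ae_restrict_of_forall_mem hMmeas fun x hx => (hρpos x hx).ne'),
      Measure.support_restrict_closure volume hU]
  have hμM : μ.restrict (closure U) = μ := by
    rw [hμ, restrict_withDensity hMmeas, Measure.restrict_restrict hMmeas, inter_self]
  obtain rfl : f = fun x => ∫ v, Real.exp ⟪x, L v⟫ ∂μ := funext fun x => by rw [hf, hμM]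
  rw [← hsupp] at haff ⊢
  rw [conicalHull_eq_hull]
  exact range_gradient_integral_exp_inner hL (hsupp ▸ hUb.isCompact_closure)
    (span_eq_top_of_affineSpan_eq ((hUne.mono (hsupp ▸ subset_closure)).image L) haff)

/-- Theorem 2.3: with `M` the closure of a nonempty bounded open set, `μ` absolutely
continuous w.r.t. Lebesgue with positive density on `M`, and `𝓛(M)` lying in (and
affinely spanning) the hyperplane `{x : ⟨x,h⟩ = 1}`, the image of the gradient map of
`f(x) = ∫_M e^{⟨x,𝓛(v)⟩} dμ(v)` is the interior of the conical hull of `𝓛(M)`. -/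
theorem stmt8 {n m : ℕ} (U M : Set (Fin n → ℝ))
    (hU : IsOpen U) (hUne : U.Nonempty) (hUb : Bornology.IsBounded U)
    (hM : M = closure U)
    (ρ : (Fin n → ℝ) → ℝ≥0∞) (hρmeas : Measurable ρ)
    (hρpos : ∀ x ∈ M, 0 < ρ x)
    (μ : Measure (Fin n → ℝ)) (hμ : μ = (volume.restrict M).withDensity ρ)
    [IsFiniteMeasure μ]
    (L : (Fin n → ℝ) → EuclideanSpace ℝ (Fin m)) (hL : Continuous L)
    (h : EuclideanSpace ℝ (Fin m)) (hhyp : ∀ v ∈ M, ⟪h, L v⟫ = 1)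
    (haff : (affineSpan ℝ (L '' M) : Set (EuclideanSpace ℝ (Fin m)))
      = {x | ⟪h, x⟫ = 1})
    (f : EuclideanSpace ℝ (Fin m) → ℝ)
    (hf : ∀ x, f x = ∫ v in M, Real.exp ⟪x, L v⟫ ∂μ) :
    Set.range (gradient f) = interior (conicalHull (L '' M)) :=
  stmt8_general U M hU hUne hUb hM ρ hρmeas hρpos μ hμ L hL h haff f hf
end

section
/- Let K ⊆ ℝ^n be compact. The set 𝓛(K) of point-evaluation functionals ℓ_v (v ∈ K) on ℝ[x]_{2d} is a compact subset of the dual space ℝ[x]_{2d}^*, contained in the affine hyperplane {ℓ : ℓ(1) = 1}, and its conical hull is a closed convex cone. -/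
open MeasureTheory

/-- The space of truncated moment sequences: real sequences indexed by monomials
(exponent vectors) of total degree at most `d` in `n` variables; this is the
(coordinatized) dual space `ℝ[x]_d^*`. -/
abbrev MomSpace (n d : ℕ) := {α : Fin n →₀ ℕ // (α.sum fun _ e => e) ≤ d} → ℝ

/-- Evaluation of the monomial `x^α` at the point `v`. -/
def evalMono {n : ℕ} (v : Fin n → ℝ) (α : Fin n →₀ ℕ) : ℝ :=
  α.prod fun i k => v i ^ k

/-- The point-evaluation functional `ℓ_v` on `ℝ[x]_d`, in moment coordinates. -/
def Lmap (n d : ℕ) (v : Fin n → ℝ) : MomSpace n d := fun α => evalMono v α.1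

/-- The pairing `⟨p, y⟩` between a polynomial `p` (of degree ≤ d) and a moment
sequence `y`; it equals `ℓ(p)` for the functional `ℓ` with moments `y`. -/
noncomputable def momPair {n d : ℕ} (y : MomSpace n d)
    (p : MvPolynomial (Fin n) ℝ) : ℝ :=
  ∑ α ∈ p.support, p.coeff α *
    (if h : (α.sum fun _ e => e) ≤ d then y ⟨α, h⟩ else 0)

/-- The cone `R_{2d}(K)` of moment sequences representable by a finite Borel
measure supported on `K`. -/
def RepCone (n d : ℕ) (K : Set (Fin n → ℝ)) : Set (MomSpace n d) :=
  {y | ∃ σ : Measure (Fin n → ℝ), IsFiniteMeasure σ ∧ σ Kᶜ = 0 ∧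
    ∀ α : {α : Fin n →₀ ℕ // (α.sum fun _ e => e) ≤ d},
      y α = ∫ v in K, evalMono v α.1 ∂σ}

/-!
The evaluation map `v ↦ ℓ_v` is continuous, so `𝓛(K)` is compact, and `ℓ_v(1) = 1`.
The conical hull of a set `S` consists of `0` and the multiples `t • x` (`t ≥ 0`) of points
`x` of its convex hull, which in finite dimension is compact when `S` is, by Carathéodory's
theorem. The functional `ℓ ↦ ℓ(1)` is `1` on that hull, so it recovers `t` from `t • x`:
the cone is the projection of a closed subset of `E × convexHull S` along the compact factor,
hence closed.
-/

open Set
open scoped Pointwise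

section ConicalHull

variable {V : Type*} [AddCommGroup V] [Module ℝ V]

theorem conicalHull_eq_pointedConeHull (s : Set V) :
    conicalHull s = (PointedCone.hull ℝ s : Set V) := by
  ext y
  rw [SetLike.mem_coe, Submodule.mem_span_set']
  constructor
  · rintro ⟨k, c, z, hc, hz, rfl⟩
    exact ⟨k, fun i => ⟨c i, hc i⟩, fun i => ⟨z i, hz i⟩, rfl⟩
  · rintro ⟨k, c, z, rfl⟩
    exact ⟨k, fun i => c i, fun i => z i, fun i => (c i).2, fun i => (z i).2, rfl⟩

theorem convex_conicalHull (s : Set V) : Convex ℝ (conicalHull s) := by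
  rw [conicalHull_eq_pointedConeHull]
  exact (PointedCone.hull ℝ s).convex

theorem conicalHull_eq_insert_zero_smul_convexHull (s : Set V) :
    conicalHull s = insert 0 (Ici (0 : ℝ) • convexHull ℝ s) := by
  apply Subset.antisymm
  · rintro _ ⟨k, c, z, hc, hz, rfl⟩
    rcases (Finset.sum_nonneg fun i _ => hc i : 0 ≤ ∑ i, c i).eq_or_lt with hsum | hsum
    · have hc0 : ∀ i, c i = 0 := fun i =>
        (Finset.sum_eq_zero_iff_of_nonneg fun i _ => hc i).mp hsum.symm i (Finset.mem_univ i)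
      simp [hc0]
    · refine Or.inr ⟨∑ i, c i, hsum.le, Finset.univ.centerMass c z,
        Finset.centerMass_mem_convexHull _ (fun i _ => hc i) hsum fun i _ => hz i, ?_⟩
      simp only [Finset.centerMass, smul_smul, mul_inv_cancel₀ hsum.ne', one_smul]
  · rw [conicalHull_eq_pointedConeHull]
    rintro _ (rfl | ⟨t, ht, x, hx, rfl⟩)
    · exact zero_mem _
    · have hx' : x ∈ PointedCone.hull ℝ s :=
        convexHull_min Submodule.subset_span (PointedCone.hull ℝ s).convex hx
      exact Submodule.smul_mem _ (⟨t, ht⟩ : NNReal) hx'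

end ConicalHull

theorem convexHull_eq_biUnion_image_stdSimplex {E : Type*} [AddCommGroup E] [Module ℝ E]
    [FiniteDimensional ℝ E] (s : Set E) :
    convexHull ℝ s = ⋃ k ∈ Iic (Module.finrank ℝ E + 1),
      (fun p : (Fin k → ℝ) × (Fin k → E) => ∑ i, p.1 i • p.2 i) ''
        (stdSimplex ℝ (Fin k) ×ˢ univ.pi fun _ => s) := by
  apply Subset.antisymm
  · intro x hx
    obtain ⟨ι, _, z, w, hzs, hz, hw0, hw1, rfl⟩ := eq_pos_convex_span_of_mem_convexHull hx
    let e := (Fintype.equivFin ι).symm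
    refine mem_biUnion (x := Fintype.card ι)
      (hz.card_le_finrank_succ.trans (Nat.succ_le_succ (Submodule.finrank_le _)))
      ⟨(w ∘ e, z ∘ e), ⟨⟨fun i => (hw0 _).le, ?_⟩, fun i _ => hzs (mem_range_self _)⟩, ?_⟩
    · rw [← hw1]
      exact e.sum_comp w
    · exact e.sum_comp fun i => w i • z i
  · simp only [iUnion_subset_iff]
    rintro k - _ ⟨⟨w, z⟩, ⟨⟨hw0, hw1⟩, hz⟩, rfl⟩
    exact (convex_convexHull ℝ s).sum_mem (fun i _ => hw0 i) hw1
      fun i _ => subset_convexHull ℝ s (hz i (mem_univ i))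

section Topology

variable {E : Type*} [AddCommGroup E] [Module ℝ E] [TopologicalSpace E]

theorem IsCompact.convexHull [ContinuousAdd E] [ContinuousSMul ℝ E] [FiniteDimensional ℝ E]
    {s : Set E} (hs : IsCompact s) : IsCompact (convexHull ℝ s) := by
  rw [convexHull_eq_biUnion_image_stdSimplex]
  refine (finite_Iic _).isCompact_biUnion fun k _ =>
    ((isCompact_stdSimplex ℝ (Fin k)).prod (isCompact_univ_pi fun _ => hs)).image ?_
  fun_prop

theorem IsCompact.isClosed_Ici_smul [T2Space E] [ContinuousSMul ℝ E] {C : Set E}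
    (hC : IsCompact C) (f : E →L[ℝ] ℝ) (hf : ∀ x ∈ C, f x = 1) :
    IsClosed (Ici (0 : ℝ) • C) := by
  have : CompactSpace C := isCompact_iff_compactSpace.mp hC
  have hgraph : Ici (0 : ℝ) • C =
      Prod.fst '' ({p : E × C | 0 ≤ f p.1} ∩ {p | p.1 = f p.1 • (p.2 : E)}) := by
    ext y
    constructor
    · rintro ⟨t, ht, x, hx, rfl⟩
      have hft : f (t • x) = t := by rw [map_smul, hf x hx, smul_eq_mul, mul_one]
      exact ⟨(t • x, ⟨x, hx⟩),
        ⟨(mem_Ici.mp ht).trans_eq hft.symm, congrArg (· • x) hft.symm⟩, rfl⟩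
    · rintro ⟨⟨y, x⟩, ⟨hy0, hy⟩, rfl⟩
      exact ⟨f y, hy0, x, x.2, hy.symm⟩
  rw [hgraph]
  have hf_fst : Continuous fun p : E × C => f p.1 := f.continuous.comp continuous_fst
  exact isClosedMap_fst_of_compactSpace _ ((isClosed_le continuous_const hf_fst).inter
    (isClosed_eq continuous_fst (hf_fst.smul (continuous_subtype_val.comp continuous_snd))))

theorem IsCompact.isClosed_conicalHull [T2Space E] [ContinuousAdd E] [ContinuousSMul ℝ E]
    [FiniteDimensional ℝ E] {s : Set E} (hs : IsCompact s) (f : E →L[ℝ] ℝ)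
    (hf : ∀ x ∈ s, f x = 1) : IsClosed (conicalHull s) := by
  rw [conicalHull_eq_insert_zero_smul_convexHull, insert_eq]
  exact isClosed_singleton.union (hs.convexHull.isClosed_Ici_smul f fun x hx =>
    convexHull_min hf (convex_hyperplane f.isLinear 1) hx)

end Topology

instance instFiniteMonomialIndex (n d : ℕ) : Finite {α : Fin n →₀ ℕ // (α.sum fun _ e => e) ≤ d} :=
  (Finsupp.finite_of_degree_le d).to_subtype

theorem continuous_Lmap (n d : ℕ) : Continuous (Lmap n d) :=
  continuous_pi fun _ => continuous_finsetProd _ fun i _ => (continuous_apply i).pow _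

def totalMass (n d : ℕ) : MomSpace n d →L[ℝ] ℝ :=
  ContinuousLinearMap.proj ⟨0, by simp⟩

theorem totalMass_Lmap (n d : ℕ) (v : Fin n → ℝ) : totalMass n d (Lmap n d v) = 1 := by
  simp [totalMass, Lmap, evalMono]

theorem momPair_one {n d : ℕ} (y : MomSpace n d) : momPair y 1 = totalMass n d y := by
  simp [momPair, MvPolynomial.support_one, totalMass]

/-- For `K ⊆ ℝ^n` compact, the set `𝓛(K)` of point-evaluation functionals is
compact, lies in the affine hyperplane `{ℓ : ℓ(1) = 1}`, and its conical hull is a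
closed convex cone. -/
theorem stmt10 {n d : ℕ} (K : Set (Fin n → ℝ)) (hK : IsCompact K) :
    IsCompact (Lmap n (2 * d) '' K) ∧
    (∀ y ∈ Lmap n (2 * d) '' K, momPair y (1 : MvPolynomial (Fin n) ℝ) = 1) ∧
    Convex ℝ (conicalHull (Lmap n (2 * d) '' K)) ∧
    IsClosed (conicalHull (Lmap n (2 * d) '' K)) := by
  have hcompact := hK.image (continuous_Lmap n (2 * d))
  have hmass : ∀ y ∈ Lmap n (2 * d) '' K, totalMass n (2 * d) y = 1 := by
    rintro _ ⟨v, -, rfl⟩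
    exact totalMass_Lmap n (2 * d) v
  refine ⟨hcompact, fun y hy => ?_, convex_conicalHull _,
    hcompact.isClosed_conicalHull (totalMass n (2 * d)) hmass⟩
  rw [momPair_one, hmass y hy]
end

section
/- The closure of the cone R_{2d}(ℝ^n) of functionals on ℝ[x]_{2d} representable by finite Borel measures on ℝ^n equals the dual cone P_{2d}(ℝ^n)* of the cone of globally nonnegative polynomials of degree ≤ 2d. -/
open MeasureTheory

/-- The cone `R_{2d}(ℝ^n)` of moment sequences of finite Borel measures on `ℝ^n`
(having all moments of degree up to `d`). -/
def RepConeAll (n d : ℕ) : Set (MomSpace n d) :=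
  {y | ∃ σ : Measure (Fin n → ℝ), IsFiniteMeasure σ ∧
    ∀ α : {α : Fin n →₀ ℕ // (α.sum fun _ e => e) ≤ d},
      Integrable (fun v => evalMono v α.1) σ ∧ y α = ∫ v, evalMono v α.1 ∂σ}

/-
The integral of a nonnegative polynomial against a measure is nonnegative, so `R_{2d}(ℝⁿ)` lies
in the dual cone, which is closed. Conversely, the closure of `R_{2d}(ℝⁿ)` is a closed convex
cone; a moment vector `y` outside it is separated from it by a linear functional `f` (Farkas'
lemma) that is nonnegative on the cone and negative at `y`. Coordinates identify `f` with a
polynomial `p` of degree `≤ 2d`: since the cone contains every point evaluation `ℓ_v`,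
`p(v) = f(ℓ_v) ≥ 0` on `ℝⁿ`, while `⟨p, y⟩ = f(y) < 0`.
-/

open MvPolynomial
open scoped NNReal

abbrev Monomials (n d : ℕ) := {α : Fin n →₀ ℕ // (α.sum fun _ e => e) ≤ d}

noncomputable instance {n d : ℕ} : Fintype (Monomials n d) :=
  haveI : Finite (Monomials n d) := (Finsupp.finite_of_degree_le (σ := Fin n) d).to_subtype
  Fintype.ofFinite _

section MomentCoordinates

variable {n d : ℕ}

lemma sum_support_eq_sum_monomials {p : MvPolynomial (Fin n) ℝ} (hp : p.totalDegree ≤ d)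
    (g : (Fin n →₀ ℕ) → ℝ) :
    ∑ β ∈ p.support, p.coeff β * g β = ∑ α : Monomials n d, p.coeff α.1 * g α.1 := by
  classical
  rw [← Finset.sum_image (f := fun β => p.coeff β * g β) fun _ _ _ _ => Subtype.ext]
  refine Finset.sum_subset (fun β hβ => ?_) fun β _ hβ => ?_
  · exact Finset.mem_image.2 ⟨⟨β, (le_totalDegree hβ).trans hp⟩, Finset.mem_univ _, rfl⟩
  · simp [notMem_support_iff.mp hβ]

lemma momPair_eq_sum (y : MomSpace n d) {p : MvPolynomial (Fin n) ℝ} (hp : p.totalDegree ≤ d) :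
    momPair y p = ∑ α : Monomials n d, p.coeff α.1 * y α := by
  rw [momPair, sum_support_eq_sum_monomials hp]
  exact Finset.sum_congr rfl fun α _ => by rw [dif_pos α.2]

lemma eval_eq_momPair_Lmap {p : MvPolynomial (Fin n) ℝ} (hp : p.totalDegree ≤ d)
    (v : Fin n → ℝ) : eval v p = momPair (Lmap n d v) p := by
  rw [momPair_eq_sum _ hp, eval_eq]
  exact sum_support_eq_sum_monomials hp (evalMono v)

lemma continuous_momPair (p : MvPolynomial (Fin n) ℝ) :
    Continuous fun y : MomSpace n d => momPair y p := by
  refine continuous_finsetSum _ fun α _ => continuous_const.mul ?_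
  by_cases h : (α.sum fun _ e => e) ≤ d <;> simp [h, continuous_apply, continuous_const]

lemma isClosed_setOf_momPair_nonneg :
    IsClosed {y : MomSpace n d | ∀ p : MvPolynomial (Fin n) ℝ,
      p.totalDegree ≤ d → (∀ x : Fin n → ℝ, 0 ≤ eval x p) → 0 ≤ momPair y p} := by
  simp only [Set.ofPred_forall]
  exact isClosed_iInter fun p => isClosed_iInter fun _ => isClosed_iInter fun _ =>
    isClosed_le continuous_const (continuous_momPair p)

lemma momPair_nonneg_of_mem_repConeAll {y : MomSpace n d} (hy : y ∈ RepConeAll n d)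
    {p : MvPolynomial (Fin n) ℝ} (hp : p.totalDegree ≤ d) (hpos : ∀ x, 0 ≤ eval x p) :
    0 ≤ momPair y p := by
  obtain ⟨σ, -, hσ⟩ := hy
  have hint : ∀ α : Monomials n d, Integrable (fun v => p.coeff α.1 * evalMono v α.1) σ :=
    fun α => (hσ α).1.const_mul _
  calc 0 ≤ ∫ v, eval v p ∂σ := integral_nonneg hpos
    _ = ∑ α : Monomials n d, ∫ v, p.coeff α.1 * evalMono v α.1 ∂σ := by
      simp_rw [eval_eq_momPair_Lmap hp, momPair_eq_sum _ hp]
      exact integral_finsetSum _ fun α _ => hint α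
    _ = momPair y p := by
      simp_rw [momPair_eq_sum _ hp, integral_const_mul, (hσ _).2]

end MomentCoordinates

section RepresentableCone

variable {n d : ℕ}

lemma zero_mem_repConeAll : (0 : MomSpace n d) ∈ RepConeAll n d :=
  ⟨0, inferInstance, fun _ => ⟨integrable_zero_measure, by simp⟩⟩

lemma add_mem_repConeAll {y z : MomSpace n d} (hy : y ∈ RepConeAll n d)
    (hz : z ∈ RepConeAll n d) : y + z ∈ RepConeAll n d := by
  obtain ⟨σ, hσfin, hσ⟩ := hy
  obtain ⟨τ, hτfin, hτ⟩ := hz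
  refine ⟨σ + τ, inferInstance, fun α => ⟨(hσ α).1.add_measure (hτ α).1, ?_⟩⟩
  rw [integral_add_measure (hσ α).1 (hτ α).1, Pi.add_apply, (hσ α).2, (hτ α).2]

lemma smul_mem_repConeAll (c : ℝ≥0) {y : MomSpace n d} (hy : y ∈ RepConeAll n d) :
    c • y ∈ RepConeAll n d := by
  obtain ⟨σ, hσfin, hσ⟩ := hy
  refine ⟨c • σ, inferInstance, fun α => ⟨(hσ α).1.smul_measure_nnreal, ?_⟩⟩
  rw [integral_smul_nnreal_measure, Pi.smul_apply, (hσ α).2]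

def repConeAll (n d : ℕ) : PointedCone ℝ (MomSpace n d) where
  carrier := RepConeAll n d
  zero_mem' := zero_mem_repConeAll
  add_mem' := add_mem_repConeAll
  smul_mem' c _ hy := smul_mem_repConeAll c hy

lemma Lmap_mem_repConeAll (v : Fin n → ℝ) : Lmap n d v ∈ RepConeAll n d := by
  refine ⟨Measure.dirac v, inferInstance, fun α => ⟨integrable_dirac enorm_lt_top, ?_⟩⟩
  rw [integral_dirac]
  rfl

end RepresentableCone

section PolynomialOfFunctional

variable {n d : ℕ}

lemma LinearMap.apply_eq_sum_mul_single {ι R : Type*} [Fintype ι] [DecidableEq ι]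
    [CommSemiring R] (f : (ι → R) →ₗ[R] R) (y : ι → R) :
    f y = ∑ i, y i * f (Pi.single i 1) := by
  rw [f.pi_apply_eq_sum_univ y]
  congr! with i
  simp [Pi.single_apply, eq_comm]

noncomputable def polyOfDual (f : MomSpace n d →ₗ[ℝ] ℝ) : MvPolynomial (Fin n) ℝ :=
  ∑ α : Monomials n d, monomial α.1 (f (Pi.single α 1))

lemma totalDegree_polyOfDual_le (f : MomSpace n d →ₗ[ℝ] ℝ) : (polyOfDual f).totalDegree ≤ d :=
  (totalDegree_finsetSum _ _).trans <|
    Finset.sup_le fun α _ => (totalDegree_monomial_le _ _).trans α.2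

lemma coeff_polyOfDual (f : MomSpace n d →ₗ[ℝ] ℝ) (α : Monomials n d) :
    (polyOfDual f).coeff α.1 = f (Pi.single α 1) := by
  simp [polyOfDual, coeff_sum, coeff_monomial, Subtype.val_inj]

lemma momPair_polyOfDual (f : MomSpace n d →ₗ[ℝ] ℝ) (y : MomSpace n d) :
    momPair y (polyOfDual f) = f y := by
  rw [momPair_eq_sum y (totalDegree_polyOfDual_le f), f.apply_eq_sum_mul_single y]
  simp_rw [coeff_polyOfDual, mul_comm]

lemma eval_polyOfDual (f : MomSpace n d →ₗ[ℝ] ℝ) (v : Fin n → ℝ) :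
    eval v (polyOfDual f) = f (Lmap n d v) := by
  rw [eval_eq_momPair_Lmap (totalDegree_polyOfDual_le f), momPair_polyOfDual]

end PolynomialOfFunctional

/-- The closure of the cone of `ℝ^n`-representable moment sequences equals the dual
cone of the cone of globally nonnegative polynomials of degree ≤ 2d. -/
theorem stmt17 {n d : ℕ} :
    closure (RepConeAll n (2 * d)) =
      {y : MomSpace n (2 * d) | ∀ p : MvPolynomial (Fin n) ℝ,
        p.totalDegree ≤ 2 * d → (∀ x : Fin n → ℝ, 0 ≤ MvPolynomial.eval x p) →
          0 ≤ momPair y p} := by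
  refine subset_antisymm (closure_minimal (fun y hy p hp hpos =>
    momPair_nonneg_of_mem_repConeAll hy hp hpos) isClosed_setOf_momPair_nonneg) ?_
  intro y hy
  by_contra hy_notMem
  obtain ⟨f, hf_nonneg, hfy⟩ :=
    ProperCone.hyperplane_separation_point (Submodule.closure (repConeAll n (2 * d))) hy_notMem
  have hp_nonneg (v : Fin n → ℝ) : 0 ≤ eval v (polyOfDual f.toLinearMap) := by
    rw [eval_polyOfDual]
    exact hf_nonneg _ (subset_closure (Lmap_mem_repConeAll v))
  have hpair := hy _ (totalDegree_polyOfDual_le _) hp_nonneg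
  rw [momPair_polyOfDual] at hpair
  exact hpair.not_gt hfy
end
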